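/- In an AL-monoid A, if a triangle on distinct vertices a,b,c has fixty (i.e. a*b = c, b*c = a, and c*a = b), then a∨b = b∨c = c∨a and a∧b∧c = 0. -/
import Mathlib


/-- An Autometrized lattice ordered monoid (AL-monoid). -/
class ALMonoid (A : Type*) extends Lattice A, AddCommMonoid A where
  amul : A → A → A
  add_le_add_left' : ∀ a b : A, a ≤ b → ∀ c : A, c + a ≤ c + b
  amul_core : ∀ a b : A, amul a (a ⊓ b) + b = a ⊔ b
  add_contract : ∀ a x y : A, amul (a + x) (a + y) ≤ amul x y
  sup_contract : ∀ a x y : A, amul (a ⊔ x) (a ⊔ y) ≤ amul x y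
  inf_contract : ∀ a x y : A, amul (a ⊓ x) (a ⊓ y) ≤ amul x y
  amul_contract : ∀ a x y : A, amul (amul a x) (amul a y) ≤ amul x y
  inf_amul_sup : ∀ a b : A, amul a (a ⊔ b) ⊓ amul b (a ⊔ b) = 0
  amul_nonneg : ∀ a b : A, 0 ≤ amul a b
  amul_eq_zero_iff : ∀ a b : A, amul a b = 0 ↔ a = b
  amul_comm : ∀ a b : A, amul a b = amul b a
  amul_triangle : ∀ a b c : A, amul a b ≤ amul a c + amul c b

open ALMonoid

infixl:70 " ⋆ " => ALMonoid.amul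

section Helpers

variable {A : Type*} [ALMonoid A]

lemma al_star_self (x : A) : x ⋆ x = 0 := (amul_eq_zero_iff x x).mpr rfl

/-- For `x ≤ y`, `y ⋆ x + x = y`. -/
lemma al_star_add_of_le {x y : A} (h : x ≤ y) : y ⋆ x + x = y := by
  have h0 := amul_core y x
  rwa [inf_eq_right.mpr h, sup_eq_left.mpr h] at h0

lemma al_star_zero {t : A} (h : 0 ≤ t) : t ⋆ 0 = t := by
  have h0 := al_star_add_of_le h
  simpa using h0

lemma al_le_add_right (x : A) {t : A} (h : 0 ≤ t) : x ≤ x + t := by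
  have h0 := add_le_add_left' (0 : A) t h x
  simpa using h0

/-- The distance between two nonnegative elements is at most their join. -/
lemma al_star_le_sup {x y : A} (hx : 0 ≤ x) (hy : 0 ≤ y) : x ⋆ y ≤ x ⊔ y := by
  have hxy : (0 : A) ≤ x ⊓ y := le_inf hx hy
  have t1 := amul_triangle x y (x ⊓ y)
  have t2 : (x ⊓ y) ⋆ y ≤ y := by
    have h0 := al_star_add_of_le (inf_le_right : x ⊓ y ≤ y)
    have h1 : y ⋆ (x ⊓ y) ≤ y := by
      calc y ⋆ (x ⊓ y) ≤ y ⋆ (x ⊓ y) + (x ⊓ y) := al_le_add_right _ hxy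
        _ = y := h0
    rwa [amul_comm] at h1
  have t3 : x ⋆ (x ⊓ y) + (x ⊓ y) ⋆ y ≤ x ⋆ (x ⊓ y) + y :=
    add_le_add_left' _ _ t2 _
  calc x ⋆ y ≤ x ⋆ (x ⊓ y) + (x ⊓ y) ⋆ y := t1
    _ ≤ x ⋆ (x ⊓ y) + y := t3
    _ = x ⊔ y := amul_core x y

/-- If `u` is disjoint from `x` and from `y` (all nonnegative), then it is
disjoint from `x + y`. -/
lemma al_disj_add {u x y : A} (hu : 0 ≤ u) (hx : 0 ≤ x) (hy : 0 ≤ y)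
    (hux : u ⊓ x = 0) (huy : u ⊓ y = 0) : u ⊓ (x + y) = 0 := by
  have hxy : (0 : A) ≤ x + y := le_trans hx (al_le_add_right x hy)
  have h1 : x ⋆ (x + y) ≤ y := by
    have h0 := add_contract x 0 y
    rw [add_zero] at h0
    calc x ⋆ (x + y) ≤ (0 : A) ⋆ y := h0
      _ = y ⋆ 0 := amul_comm 0 y
      _ = y := al_star_zero hy
  have h2 := inf_contract u x (x + y)
  rw [hux] at h2
  have h3 : (0 : A) ⋆ (u ⊓ (x + y)) = u ⊓ (x + y) := by
    rw [amul_comm]; exact al_star_zero (le_inf hu hxy)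
  have h4 : u ⊓ (x + y) ≤ y := by
    rw [← h3]; exact le_trans h2 h1
  have h5 : u ⊓ (x + y) ≤ u ⊓ y := le_inf inf_le_left h4
  exact le_antisymm (by rw [huy] at h5; exact h5) (le_inf hu hxy)

/-- Key inequality: if `m ≤ x`, `0 ≤ m`, `0 ≤ q` and `x ⋆ q ≤ p`,
then `m ≤ m ⊓ p + m ⊓ q`. -/
lemma al_key_ineq {m x p q : A} (hm : 0 ≤ m) (hmx : m ≤ x) (hq : 0 ≤ q)
    (hk : x ⋆ q ≤ p) : m ≤ m ⊓ p + m ⊓ q := by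
  have s1 := inf_contract m x q
  rw [inf_eq_left.mpr hmx] at s1
  have s2 : m ⋆ (m ⊓ q) ≤ m := by
    have h0 := sup_contract (m ⊓ q) m 0
    rw [sup_eq_right.mpr (inf_le_left : m ⊓ q ≤ m),
        sup_eq_left.mpr (le_inf hm hq), al_star_zero hm] at h0
    exact h0
  have s3 : m ⋆ (m ⊓ q) ≤ m ⊓ p := le_inf s2 (le_trans s1 hk)
  have s4 := al_star_add_of_le (inf_le_left : m ⊓ q ≤ m)
  calc m = m ⋆ (m ⊓ q) + m ⊓ q := s4.symm
    _ ≤ m ⊓ p + m ⊓ q := by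
        have h0 := add_le_add_left' _ _ s3 (m ⊓ q)
        simpa [add_comm] using h0

end Helpers

theorem stmt1 {A : Type*} [ALMonoid A] (a b c : A)
    (hab : a ≠ b) (hbc : b ≠ c) (hca : c ≠ a)
    (h1 : a ⋆ b = c) (h2 : b ⋆ c = a) (h3 : c ⋆ a = b) :
    a ⊔ b = b ⊔ c ∧ b ⊔ c = c ⊔ a ∧ a ⊓ b ⊓ c = 0 := by
  -- nonnegativity of the vertices
  have ha : (0 : A) ≤ a := by
    have h := amul_contract b b c
    rw [al_star_self b, h2] at h
    exact le_trans (amul_nonneg 0 a) h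
  have hb : (0 : A) ≤ b := by
    have h := amul_contract c c a
    rw [al_star_self c, h3] at h
    exact le_trans (amul_nonneg 0 b) h
  have hc : (0 : A) ≤ c := by
    have h := amul_contract a a b
    rw [al_star_self a, h1] at h
    exact le_trans (amul_nonneg 0 c) h
  -- each vertex is below the join of the other two
  have hcw : c ≤ a ⊔ b := h1 ▸ al_star_le_sup ha hb
  have haw : a ≤ b ⊔ c := h2 ▸ al_star_le_sup hb hc
  have hbw : b ≤ c ⊔ a := h3 ▸ al_star_le_sup hc ha
  -- the three joins coincide
  have e1 : a ⊔ b = b ⊔ c :=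
    le_antisymm (sup_le haw le_sup_left) (sup_le le_sup_right hcw)
  have e2 : b ⊔ c = c ⊔ a :=
    le_antisymm (sup_le hbw le_sup_left) (sup_le le_sup_right haw)
  refine ⟨e1, e2, ?_⟩
  -- notation: w = a ⊔ b is the common join; α, β, γ distances to it
  have dab : (a ⋆ (a ⊔ b)) ⊓ (b ⋆ (a ⊔ b)) = 0 := inf_amul_sup a b
  have dbc : (b ⋆ (a ⊔ b)) ⊓ (c ⋆ (a ⊔ b)) = 0 := by
    rw [e1]; exact inf_amul_sup b c
  have dca : (c ⋆ (a ⊔ b)) ⊓ (a ⋆ (a ⊔ b)) = 0 := by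
    rw [e1, e2]; exact inf_amul_sup c a
  have hα : (0 : A) ≤ a ⋆ (a ⊔ b) := amul_nonneg _ _
  have hβ : (0 : A) ≤ b ⋆ (a ⊔ b) := amul_nonneg _ _
  have hγ : (0 : A) ≤ c ⋆ (a ⊔ b) := amul_nonneg _ _
  have hm : (0 : A) ≤ a ⊓ b ⊓ c := le_inf (le_inf ha hb) hc
  have hma : a ⊓ b ⊓ c ≤ a := le_trans inf_le_left inf_le_left
  have hmb : a ⊓ b ⊓ c ≤ b := le_trans inf_le_left inf_le_right
  have hmc : a ⊓ b ⊓ c ≤ c := inf_le_right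
  -- contraction with fixty
  have k1 : c ⋆ (b ⋆ (a ⊔ b)) ≤ a ⋆ (a ⊔ b) := by
    have h := amul_contract b a (a ⊔ b)
    rwa [amul_comm b a, h1] at h
  have k2 : a ⋆ (c ⋆ (a ⊔ b)) ≤ b ⋆ (a ⊔ b) := by
    have h := amul_contract c b (a ⊔ b)
    rwa [amul_comm c b, h2] at h
  have k3 : b ⋆ (a ⋆ (a ⊔ b)) ≤ c ⋆ (a ⊔ b) := by
    have h := amul_contract a c (a ⊔ b)
    rwa [amul_comm a c, h3] at h
  set m := a ⊓ b ⊓ c with hmdef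
  set α := a ⋆ (a ⊔ b) with hαdef
  set β := b ⋆ (a ⊔ b) with hβdef
  set γ := c ⋆ (a ⊔ b) with hγdef
  have key12 : m ≤ m ⊓ α + m ⊓ β := al_key_ineq hm hmc hβ k1
  have key23 : m ≤ m ⊓ β + m ⊓ γ := al_key_ineq hm hma hγ k2
  have key31 : m ≤ m ⊓ γ + m ⊓ α := al_key_ineq hm hmb hα k3
  have hn1 : (0 : A) ≤ m ⊓ α := le_inf hm hα
  have hn2 : (0 : A) ≤ m ⊓ β := le_inf hm hβ
  have hn3 : (0 : A) ≤ m ⊓ γ := le_inf hm hγ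
  have d12 : (m ⊓ α) ⊓ (m ⊓ β) = 0 :=
    le_antisymm (le_trans (inf_le_inf inf_le_right inf_le_right) dab.le)
      (le_inf hn1 hn2)
  have d23 : (m ⊓ β) ⊓ (m ⊓ γ) = 0 :=
    le_antisymm (le_trans (inf_le_inf inf_le_right inf_le_right) dbc.le)
      (le_inf hn2 hn3)
  have d31 : (m ⊓ γ) ⊓ (m ⊓ α) = 0 :=
    le_antisymm (le_trans (inf_le_inf inf_le_right inf_le_right) dca.le)
      (le_inf hn3 hn1)
  have d13 : (m ⊓ α) ⊓ (m ⊓ γ) = 0 := by rw [inf_comm]; exact d31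
  have d32 : (m ⊓ γ) ⊓ (m ⊓ β) = 0 := by rw [inf_comm]; exact d23
  -- m ⊓ α = 0
  have z1 : m ⊓ α = 0 := by
    have hsub : m ⊓ α ≤ m ⊓ β + m ⊓ γ := le_trans inf_le_left key23
    have h0 := al_disj_add hn1 hn2 hn3 d12 d13
    rw [inf_eq_left.mpr hsub] at h0
    exact h0
  -- m ⊓ γ = 0
  have z3 : m ⊓ γ = 0 := by
    have hsub : m ⊓ γ ≤ m ⊓ α + m ⊓ β := le_trans inf_le_left key12
    have h0 := al_disj_add hn3 hn1 hn2 (by rw [inf_comm]; exact d13) d32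
    rw [inf_eq_left.mpr hsub] at h0
    exact h0
  have : m ≤ 0 := by
    calc m ≤ m ⊓ γ + m ⊓ α := key31
      _ = 0 := by rw [z1, z3, add_zero]
  exact le_antisymm this hm
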